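/- arXiv:0911.3210 — 3 statements merged into one kernel-verified Lean document; each statement's English description precedes it below -/
import Mathlib

section
/- Let a, b > 0 be real numbers, let g, h ∈ SU(1,1), and set A = g·diag(a,−a)·g⁻¹ and B = h·diag(b,−b)·h⁻¹. Then A + B has real eigenvalues of the form c and −c for some real c, and this c necessarily satisfies the reversed triangle inequality c ≥ a + b. -/
/-!
Write `diag(a, −a) = a J`. Since `g⁻¹ = J gᴴ J` on `SU(1,1)`, the matrices `A` and `B` are
traceless with `det A = −a²`, `det B = −b²`, and `tr (A B) = a b · tr (V Vᴴ)` for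
`V = gᴴ J h`. For traceless `2 × 2` matrices `det (A + B) = det A + det B − tr (A B)`, so
`−det (A + B) = a² + b² + a b ‖V‖²`, with `‖V‖` the Frobenius norm. As `|det V| = 1` and
`‖V‖² ≥ 2 |det V|` for every `2 × 2` matrix, `−det (A + B) ≥ (a + b)²`, and the eigenvalues
of `A + B` are `±c` with `c = √(−det (A + B)) ≥ a + b`.
-/

open Matrix Polynomial

noncomputable section

/-- The signature matrix `J = diag(1,…,1,−1,…,−1)` with `p` ones and `q` minus ones. -/
def Jmat (p q : ℕ) : Matrix (Fin (p + q)) (Fin (p + q)) ℂ :=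
  Matrix.diagonal fun i => if (i : ℕ) < p then 1 else -1

/-- The group `SU(p,q)` of complex `(p+q)×(p+q)` matrices `g` with `det g = 1` and
`gᴴ J g = J`. -/
def SUpq (p q : ℕ) : Set (Matrix (Fin (p + q)) (Fin (p + q)) ℂ) :=
  { g | g.det = 1 ∧ g.conjTranspose * Jmat p q * g = Jmat p q }

/-- `x` is the ordered spectrum of `M`: the entries of `x` are non-increasing within the
first `p` coordinates and within the last `q` coordinates, every entry of the first block
is strictly greater than every entry of the second block, and the eigenvalues of `M`
counted with multiplicity are exactly the entries of `x` (its characteristic polynomial is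
`∏ i (X - x i)`). -/
def IsOrderedSpectrum (p q : ℕ) (M : Matrix (Fin (p + q)) (Fin (p + q)) ℂ)
    (x : Fin (p + q) → ℝ) : Prop :=
  (∀ i j : Fin (p + q), i ≤ j → ((j : ℕ) < p ∨ p ≤ (i : ℕ)) → x j ≤ x i) ∧
  (∀ i j : Fin (p + q), (i : ℕ) < p → p ≤ (j : ℕ) → x j < x i) ∧
  M.charpoly = ∏ i, (X - Polynomial.C ((x i : ℂ)))

namespace Matrix

theorem det_add_fin_two {R : Type*} [CommRing R] (A B : Matrix (Fin 2) (Fin 2) R) :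
    (A + B).det = A.det + B.det + A.trace * B.trace - (A * B).trace := by
  simp only [det_fin_two, trace_fin_two, add_apply, mul_apply, Fin.sum_univ_two]
  ring

theorem charpoly_fin_two_of_trace_eq_zero {R : Type*} [CommRing R] [Nontrivial R]
    {M : Matrix (Fin 2) (Fin 2) R} {c : R} (htr : M.trace = 0) (hdet : M.det = -c ^ 2) :
    M.charpoly = (X - C c) * (X - C (-c)) := by
  rw [charpoly_fin_two, htr, hdet, map_neg, map_neg, map_pow, map_zero]
  ring

theorem trace_mul_conjTranspose_self {m n : Type*} [Fintype m] [Fintype n] (V : Matrix m n ℂ) :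
    (V * Vᴴ).trace = ((∑ i, ∑ j, ‖V i j‖ ^ 2 : ℝ) : ℂ) := by
  simp [trace, mul_apply, Complex.mul_conj, Complex.normSq_eq_norm_sq]

theorem two_mul_norm_det_le_sum_norm_sq (V : Matrix (Fin 2) (Fin 2) ℂ) :
    2 * ‖V.det‖ ≤ ∑ i, ∑ j, ‖V i j‖ ^ 2 := by
  have h := norm_sub_le (V 0 0 * V 1 1) (V 0 1 * V 1 0)
  rw [norm_mul, norm_mul] at h
  rw [det_fin_two]
  simp only [Fin.sum_univ_two]
  nlinarith [sq_nonneg (‖V 0 0‖ - ‖V 1 1‖), sq_nonneg (‖V 0 1‖ - ‖V 1 0‖)]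

end Matrix

section Jmat

variable {p q : ℕ}

theorem Jmat_mul_self : Jmat p q * Jmat p q = 1 := by
  rw [Jmat, diagonal_mul_diagonal, ← diagonal_one]
  congr 1
  funext i
  split_ifs <;> norm_num

theorem Jmat_mul_Jmat_mul (M : Matrix (Fin (p + q)) (Fin (p + q)) ℂ) :
    Jmat p q * (Jmat p q * M) = M := by
  rw [← Matrix.mul_assoc, Jmat_mul_self, Matrix.one_mul]

theorem Jmat_conjTranspose : (Jmat p q)ᴴ = Jmat p q := by
  rw [Jmat, diagonal_conjTranspose]
  congr 1
  funext i
  split_ifs <;> simp [*]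

theorem det_Jmat_one_one : (Jmat 1 1).det = -1 := by
  simp [Jmat, det_diagonal, Fin.prod_univ_two]

theorem trace_Jmat_one_one : (Jmat 1 1).trace = 0 := by
  simp [Jmat, trace_diagonal, Fin.sum_univ_two]

theorem diagonal_eq_smul_Jmat_one_one (a : ℝ) :
    diagonal ![(a : ℂ), (-a : ℝ)] = (a : ℂ) • Jmat 1 1 := by
  ext i j
  fin_cases i <;> fin_cases j <;> simp [Jmat]

end Jmat

namespace SUpq

section General

variable {p q : ℕ} {g h : Matrix (Fin (p + q)) (Fin (p + q)) ℂ}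

theorem isUnit (hg : g ∈ SUpq p q) : IsUnit g :=
  (isUnit_iff_isUnit_det g).mpr (hg.1 ▸ isUnit_one)

theorem inv_eq (hg : g ∈ SUpq p q) : g⁻¹ = Jmat p q * gᴴ * Jmat p q := by
  refine inv_eq_left_inv ?_
  rw [Matrix.mul_assoc, Matrix.mul_assoc, ← Matrix.mul_assoc gᴴ, hg.2, Jmat_mul_self]

theorem conj_Jmat (hg : g ∈ SUpq p q) : g * Jmat p q * g⁻¹ = g * gᴴ * Jmat p q := by
  rw [inv_eq hg]
  simp only [Matrix.mul_assoc, Jmat_mul_Jmat_mul]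

theorem trace_conj_Jmat_mul_conj_Jmat (hg : g ∈ SUpq p q) (hh : h ∈ SUpq p q) :
    (g * Jmat p q * g⁻¹ * (h * Jmat p q * h⁻¹)).trace =
      (gᴴ * Jmat p q * h * (gᴴ * Jmat p q * h)ᴴ).trace := by
  rw [conj_Jmat hg, conj_Jmat hh, conjTranspose_mul, conjTranspose_mul, Jmat_conjTranspose,
    conjTranspose_conjTranspose]
  simp only [Matrix.mul_assoc]
  rw [trace_mul_comm]
  simp only [Matrix.mul_assoc]

end General

variable {g h : Matrix (Fin (1 + 1)) (Fin (1 + 1)) ℂ}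

theorem trace_smul_conj_Jmat (a : ℂ) (hg : g ∈ SUpq 1 1) :
    (a • (g * Jmat 1 1 * g⁻¹)).trace = 0 := by
  rw [trace_smul, trace_conj (isUnit hg), trace_Jmat_one_one, smul_zero]

theorem two_le_sum_norm_sq (hg : g ∈ SUpq 1 1) (hh : h ∈ SUpq 1 1) :
    2 ≤ ∑ i, ∑ j, ‖(gᴴ * Jmat 1 1 * h) i j‖ ^ 2 := by
  simpa [det_mul, det_conjTranspose, hg.1, hh.1, det_Jmat_one_one] using
    two_mul_norm_det_le_sum_norm_sq (gᴴ * Jmat 1 1 * h)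

theorem det_smul_conj_Jmat_add (a b : ℝ) (hg : g ∈ SUpq 1 1) (hh : h ∈ SUpq 1 1) :
    ((a : ℂ) • (g * Jmat 1 1 * g⁻¹) + (b : ℂ) • (h * Jmat 1 1 * h⁻¹)).det =
      -((a ^ 2 + b ^ 2 + a * b * ∑ i, ∑ j, ‖(gᴴ * Jmat 1 1 * h) i j‖ ^ 2 : ℝ) : ℂ) := by
  rw [det_add_fin_two, trace_smul_conj_Jmat a hg, zero_mul, smul_mul_smul, trace_smul,
    trace_conj_Jmat_mul_conj_Jmat hg hh, trace_mul_conjTranspose_self, det_smul, det_smul,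
    det_conj (isUnit hg), det_conj (isUnit hh), det_Jmat_one_one]
  push_cast
  simp only [Fintype.card_fin, smul_eq_mul]
  ring

end SUpq

/-- if `a, b > 0`, `g, h ∈ SU(1,1)`, `A = g·diag(a,−a)·g⁻¹` and
`B = h·diag(b,−b)·h⁻¹`, then `A + B` has real eigenvalues `c, −c` with `c ≥ a + b`. -/
theorem sum_SU11_orbits_reversed_triangle (a b : ℝ) (ha : 0 < a) (hb : 0 < b)
    (g h A B : Matrix (Fin (1 + 1)) (Fin (1 + 1)) ℂ)
    (hg : g ∈ SUpq 1 1) (hh : h ∈ SUpq 1 1)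
    (hA : A = g * Matrix.diagonal ![(a : ℂ), (-a : ℝ)] * g⁻¹)
    (hB : B = h * Matrix.diagonal ![(b : ℂ), (-b : ℝ)] * h⁻¹) :
    ∃ c : ℝ, a + b ≤ c ∧
      (A + B).charpoly =
        (X - Polynomial.C ((c : ℂ))) * (X - Polynomial.C ((-c : ℝ) : ℂ)) := by
  rw [diagonal_eq_smul_Jmat_one_one, Matrix.mul_smul, Matrix.smul_mul] at hA hB
  set s := ∑ i, ∑ j, ‖(gᴴ * Jmat 1 1 * h) i j‖ ^ 2
  have hs : 2 ≤ s := SUpq.two_le_sum_norm_sq hg hh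
  have hsq : (a + b) ^ 2 ≤ a ^ 2 + b ^ 2 + a * b * s := by nlinarith [mul_pos ha hb]
  have htr : (A + B).trace = 0 := by
    rw [hA, hB, trace_add, SUpq.trace_smul_conj_Jmat _ hg, SUpq.trace_smul_conj_Jmat _ hh,
      add_zero]
  have hdet : (A + B).det = -((√(a ^ 2 + b ^ 2 + a * b * s) : ℝ) : ℂ) ^ 2 := by
    rw [← Complex.ofReal_pow, Real.sq_sqrt (by positivity), hA, hB,
      SUpq.det_smul_conj_Jmat_add a b hg hh]
  refine ⟨√(a ^ 2 + b ^ 2 + a * b * s), Real.le_sqrt_of_sq_le hsq, ?_⟩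
  rw [Complex.ofReal_neg]
  exact charpoly_fin_two_of_trace_eq_zero htr hdet
end
end

section
/- Let a, b > 0 be real numbers and let c be any real number with c ≥ a + b. Then there exist g, h ∈ SU(1,1) such that the matrix g·diag(a,−a)·g⁻¹ + h·diag(b,−b)·h⁻¹ has eigenvalues exactly c and −c. -/
open Matrix Polynomial

noncomputable section

/-!
Take `h = 1` and `g = B(t/2)`, where `B(t) = [[cosh t, sinh t], [sinh t, cosh t]]`.
Since `J B(t) = B(-t) J`, conjugating `diag(a,-a) = a J` by `B(t/2)` gives `a B(t) J`, so the
sum is the traceless matrix `(a B(t) + b) J` of determinant `-(a² + 2ab cosh t + b²)`.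
The condition `c ≥ a + b` is exactly what allows `cosh t = (c² - a² - b²) / (2ab) ≥ 1`, and
then the eigenvalues are `±c`.
-/

lemma Jmat_one_one : Jmat 1 1 = !![(1 : ℂ), 0; 0, -1] := by
  ext i j
  fin_cases i <;> fin_cases j <;> rfl

lemma diagonal_neg_eq_smul_Jmat (x : ℂ) : diagonal ![x, -x] = x • Jmat 1 1 := by
  rw [Jmat_one_one]
  ext i j
  fin_cases i <;> fin_cases j <;> simp

lemma one_mem_SUpq (p q : ℕ) : 1 ∈ SUpq p q := by
  simp [SUpq]

lemma charpoly_eq_of_trace_eq_zero_of_det_eq_neg_sq {R : Type*} [CommRing R] [Nontrivial R]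
    (M : Matrix (Fin 2) (Fin 2) R) (c : R) (htr : M.trace = 0) (hdet : M.det = -c ^ 2) :
    M.charpoly = (X - C c) * (X - C (-c)) := by
  rw [charpoly_fin_two, htr, hdet, map_neg, map_neg, map_pow, map_zero]
  ring

def boost (t : ℝ) : Matrix (Fin 2) (Fin 2) ℂ :=
  !![(Real.cosh t : ℂ), Real.sinh t; Real.sinh t, Real.cosh t]

lemma boost_add (s t : ℝ) : boost (s + t) = boost s * boost t := by
  rw [boost, boost, boost, mul_fin_two, Real.cosh_add, Real.sinh_add]
  push_cast
  ring_nf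

lemma boost_zero : boost 0 = 1 := by
  ext i j
  fin_cases i <;> fin_cases j <;> simp [boost]

lemma inv_boost (t : ℝ) : (boost t)⁻¹ = boost (-t) :=
  inv_eq_right_inv (by rw [← boost_add, add_neg_cancel, boost_zero])

lemma conjTranspose_boost (t : ℝ) : (boost t)ᴴ = boost t := by
  ext i j
  fin_cases i <;> fin_cases j <;> simp [boost, -Complex.ofReal_cosh, -Complex.ofReal_sinh]

lemma det_boost (t : ℝ) : (boost t).det = 1 := by
  rw [boost, det_fin_two_of]
  norm_cast
  linear_combination Real.cosh_sq_sub_sinh_sq t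

lemma Jmat_mul_boost (t : ℝ) : Jmat 1 1 * boost t = boost (-t) * Jmat 1 1 := by
  rw [Jmat_one_one]
  ext i j
  fin_cases i <;> fin_cases j <;> simp [boost, mul_apply]

lemma boost_mem_SUpq (t : ℝ) : boost t ∈ SUpq 1 1 := by
  refine ⟨det_boost t, ?_⟩
  rw [conjTranspose_boost, Matrix.mul_assoc, Jmat_mul_boost, ← Matrix.mul_assoc, ← boost_add,
    add_neg_cancel, boost_zero, Matrix.one_mul]

lemma boost_mul_smul_Jmat_mul_inv (t : ℝ) (x : ℂ) :
    boost t * (x • Jmat 1 1) * (boost t)⁻¹ = x • (boost (2 * t) * Jmat 1 1) := by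
  rw [inv_boost, Matrix.mul_smul, Matrix.smul_mul, Matrix.mul_assoc, Jmat_mul_boost, neg_neg,
    ← Matrix.mul_assoc, ← boost_add, two_mul]

lemma smul_boost_mul_Jmat_add_smul_Jmat (x y : ℂ) (s : ℝ) :
    x • (boost s * Jmat 1 1) + y • Jmat 1 1 =
      !![x * Real.cosh s + y, -(x * Real.sinh s); x * Real.sinh s, -(x * Real.cosh s + y)] := by
  ext i j
  fin_cases i <;> fin_cases j <;> simp [boost, Jmat_one_one, add_comm]

lemma trace_smul_boost_mul_Jmat_add_smul_Jmat (x y : ℂ) (s : ℝ) :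
    (x • (boost s * Jmat 1 1) + y • Jmat 1 1).trace = 0 := by
  rw [smul_boost_mul_Jmat_add_smul_Jmat, trace_fin_two_of]
  ring

lemma det_smul_boost_mul_Jmat_add_smul_Jmat (x y : ℂ) (s : ℝ) :
    (x • (boost s * Jmat 1 1) + y • Jmat 1 1).det =
      -(x ^ 2 + 2 * x * y * Real.cosh s + y ^ 2) := by
  have hcosh : (Real.cosh s : ℂ) ^ 2 - (Real.sinh s : ℂ) ^ 2 = 1 := by
    exact_mod_cast Real.cosh_sq_sub_sinh_sq s
  rw [smul_boost_mul_Jmat_add_smul_Jmat, det_fin_two_of]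
  linear_combination -x ^ 2 * hcosh

/-- for `a, b > 0` and any `c ≥ a + b` there are `g, h ∈ SU(1,1)` such that
`g·diag(a,−a)·g⁻¹ + h·diag(b,−b)·h⁻¹` has eigenvalues exactly `c` and `−c`. -/
theorem exists_SU11_conjugates_with_spectrum (a b c : ℝ) (ha : 0 < a) (hb : 0 < b)
    (hc : a + b ≤ c) :
    ∃ g ∈ SUpq 1 1, ∃ h ∈ SUpq 1 1,
      (g * Matrix.diagonal ![(a : ℂ), (-a : ℝ)] * g⁻¹ +
        h * Matrix.diagonal ![(b : ℂ), (-b : ℝ)] * h⁻¹).charpoly =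
        (X - Polynomial.C ((c : ℂ))) * (X - Polynomial.C ((-c : ℝ) : ℂ)) := by
  have hcosh : 1 ≤ (c ^ 2 - a ^ 2 - b ^ 2) / (2 * a * b) := by
    rw [one_le_div (by positivity)]
    nlinarith
  obtain ⟨s, hs⟩ : ∃ s, 2 * a * b * Real.cosh s = c ^ 2 - a ^ 2 - b ^ 2 :=
    ⟨_, by rw [Real.cosh_arcosh hcosh]; field_simp⟩
  refine ⟨boost (s / 2), boost_mem_SUpq _, 1, one_mem_SUpq 1 1, ?_⟩
  simp only [Complex.ofReal_neg]
  rw [diagonal_neg_eq_smul_Jmat, diagonal_neg_eq_smul_Jmat, boost_mul_smul_Jmat_mul_inv,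
    mul_div_cancel₀ s two_ne_zero, inv_one, Matrix.mul_one, Matrix.one_mul]
  refine charpoly_eq_of_trace_eq_zero_of_det_eq_neg_sq _ _
    (trace_smul_boost_mul_Jmat_add_smul_Jmat _ _ _) ?_
  have hsℂ : 2 * (a : ℂ) * b * Real.cosh s = c ^ 2 - a ^ 2 - b ^ 2 := by exact_mod_cast hs
  rw [det_smul_boost_mul_Jmat_add_smul_Jmat]
  linear_combination -hsℂ
end
end

section
/- Let C be a nonempty closed convex subset of ℝⁿ containing no affine line. Then C = Conv(Ext(C)) + lim(C): every element of C is the sum of a convex combination of extreme points of C and a vector v with C + v ⊆ C, and conversely every such sum lies in C. -/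
/-!
For `z ∈ C` let `D z` be the space of directions `u` such that `C` contains a small segment
centred at `z` in direction `u`. If `D z = 0` then `z` is extreme. Otherwise pick `u ≠ 0` in
`D z`: since `C` contains no line, `C ∩ (z + ℝ u)` is a closed interval bounded on at least one
side, and each finite endpoint `p` has `D p < D z`. By well-founded induction on `D` (the
space is finite-dimensional) the endpoints lie in `Conv(Ext C) + lim C`, and `z` is either a
convex combination of two endpoints or an endpoint plus a multiple of `u ∈ lim C`.
-/

open Set Filter Topology Pointwise

section RecessionCone

variable {E : Type*} [AddCommGroup E] {C : Set E}

def recessionCone (C : Set E) : Set E := {v | ∀ w ∈ C, w + v ∈ C}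

lemma zero_mem_recessionCone : (0 : E) ∈ recessionCone C :=
  fun w hw => by rwa [add_zero]

lemma recessionCone_add_recessionCone_subset :
    recessionCone C + recessionCone C ⊆ recessionCone C := by
  rintro _ ⟨v, hv, v', hv', rfl⟩ w hw
  rw [← add_assoc]
  exact hv' _ (hv w hw)

variable [Module ℝ E]

lemma convex_recessionCone (hC : Convex ℝ C) : Convex ℝ (recessionCone C) := by
  intro v hv v' hv' a b ha hb hab w hw
  convert hC (hv w hw) (hv' w hw) ha hb hab using 1
  match_scalars <;> linarith

lemma Convex.convexHull_extremePoints_add_recessionCone_subset (hC : Convex ℝ C) :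
    convexHull ℝ (C.extremePoints ℝ) + recessionCone C ⊆ C := by
  rintro _ ⟨y, hy, v, hv, rfl⟩
  exact hv y (convexHull_min extremePoints_subset hC hy)

end RecessionCone

variable {E : Type*} [AddCommGroup E] [Module ℝ E] {C : Set E}

lemma Convex.ordConnected_setOf_add_smul_mem (hC : Convex ℝ C) (z u : E) :
    OrdConnected {t : ℝ | z + t • u ∈ C} := by
  have hpre : {t : ℝ | z + t • u ∈ C} = AffineMap.lineMap z (z + u) ⁻¹' C := by
    ext t
    rw [mem_preimage, AffineMap.lineMap_apply, vsub_eq_sub, add_sub_cancel_left, vadd_eq_add,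
      add_comm]
    rfl
  rw [hpre]
  exact (hC.affine_preimage _).ordConnected

lemma Convex.bddBelow_or_bddAbove_setOf_add_smul_mem (hC : Convex ℝ C)
    (hline : ¬∃ x u : E, u ≠ 0 ∧ ∀ t : ℝ, x + t • u ∈ C) (z : E) {u : E} (hu : u ≠ 0) :
    BddBelow {t : ℝ | z + t • u ∈ C} ∨ BddAbove {t : ℝ | z + t • u ∈ C} := by
  by_contra! h
  refine hline ⟨z, u, hu, fun t => ?_⟩
  obtain ⟨s, hs, hst⟩ := not_bddBelow_iff.1 h.1 t
  obtain ⟨s', hs', hts'⟩ := not_bddAbove_iff.1 h.2 t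
  exact (hC.ordConnected_setOf_add_smul_mem z u).out hs hs' ⟨hst.le, hts'.le⟩

lemma bddBelow_setOf_add_smul_neg_mem_iff (z u : E) :
    BddBelow {t : ℝ | z + t • -u ∈ C} ↔ BddAbove {t : ℝ | z + t • u ∈ C} := by
  rw [← bddBelow_neg]
  congr! 2 with t
  simp [smul_neg, neg_smul]

def Convex.twoSidedDirections (hC : Convex ℝ C) {x : E} (hx : x ∈ C) : Submodule ℝ E where
  carrier := {u | ∃ ε : ℝ, 0 < ε ∧ ∀ t : ℝ, |t| ≤ ε → x + t • u ∈ C}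
  zero_mem' := ⟨1, one_pos, fun t _ => by simpa using hx⟩
  add_mem' := by
    rintro u v ⟨ε, hε, hu⟩ ⟨δ, hδ, hv⟩
    refine ⟨min ε δ / 2, by positivity, fun t ht => ?_⟩
    have h2t : |2 * t| ≤ min ε δ := by rw [abs_mul, abs_two]; linarith
    convert hC (hu _ (h2t.trans (min_le_left ε δ))) (hv _ (h2t.trans (min_le_right ε δ)))
      (by norm_num : (0:ℝ) ≤ 1/2) (by norm_num : (0:ℝ) ≤ 1/2) (by norm_num) using 1
    module
  smul_mem' := by
    rintro c u ⟨ε, hε, hu⟩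
    refine ⟨ε / (|c| + 1), by positivity, fun t ht => ?_⟩
    rw [smul_smul]
    refine hu _ ?_
    calc |t * c| = |t| * |c| := abs_mul t c
      _ ≤ ε / (|c| + 1) * (|c| + 1) := by gcongr; linarith
      _ = ε := div_mul_cancel₀ _ (by positivity)

lemma Convex.twoSidedDirections_le_of_mem_openSegment (hC : Convex ℝ C) {p q z : E}
    (hp : p ∈ C) (hq : q ∈ C) (hz : z ∈ C) (hpqz : z ∈ openSegment ℝ p q) :
    hC.twoSidedDirections hp ≤ hC.twoSidedDirections hz := by
  obtain ⟨a, b, ha, hb, hab, rfl⟩ := hpqz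
  rintro w ⟨ε, hε, hw⟩
  refine ⟨a * ε, mul_pos ha hε, fun t ht => ?_⟩
  have ht' : |t / a| ≤ ε := by
    rw [abs_div, abs_of_pos ha, div_le_iff₀ ha, mul_comm]; exact ht
  convert hC (hw _ ht') hq ha.le hb.le hab using 1
  rw [smul_add, smul_smul, mul_div_cancel₀ _ ha.ne']
  abel

lemma Convex.mem_extremePoints_of_twoSidedDirections_eq_bot (hC : Convex ℝ C) {z : E}
    (hz : z ∈ C) (hbot : hC.twoSidedDirections hz = ⊥) : z ∈ C.extremePoints ℝ := by
  refine mem_extremePoints_iff_left.2 ⟨hz, fun x₁ hx₁ x₂ hx₂ hseg => ?_⟩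
  obtain ⟨a, b, ha, hb, hab, rfl⟩ := id hseg
  have hmem : x₂ - x₁ ∈ hC.twoSidedDirections hz := by
    refine ⟨min a b, lt_min ha hb, fun t ht => ?_⟩
    have hb_t : b + t ∈ Icc (0 : ℝ) 1 := by
      constructor <;> linarith [abs_le.1 ht, min_le_left a b, min_le_right a b]
    convert hC.add_smul_mem (y := x₂ - x₁) hx₁ (by rwa [add_sub_cancel]) hb_t using 1
    obtain rfl : a = 1 - b := by linarith
    module
  rw [hbot, Submodule.mem_bot, sub_eq_zero] at hmem
  subst hmem
  rw [← add_smul, hab, one_smul]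

variable [TopologicalSpace E] [ContinuousAdd E] [ContinuousSMul ℝ E]

lemma Convex.mem_recessionCone_of_forall_add_smul_mem (hC : Convex ℝ C) (hcl : IsClosed C)
    {p v : E} (hray : ∀ t : ℝ, 0 ≤ t → p + t • v ∈ C) :
    v ∈ recessionCone C := by
  intro w hw
  have hmem : ∀ n : ℕ, w + v + (1 / (n + 1 : ℝ)) • (p - w) ∈ C := by
    intro n
    have hn : (0 : ℝ) < n + 1 := by positivity
    convert hC.add_smul_mem (t := 1 / (n + 1)) hw (by rw [add_sub_cancel]; exact hray _ hn.le)
      ⟨by positivity, div_le_one_of_le₀ (by linarith) hn.le⟩ using 1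
    simp only [smul_sub, smul_add, smul_smul, one_div, inv_mul_cancel₀ hn.ne', one_smul]
    abel
  have hlim : Tendsto (fun n : ℕ => w + v + (1 / (n + 1 : ℝ)) • (p - w)) atTop (𝓝 (w + v)) := by
    have h0 : Tendsto (fun n : ℕ => 1 / (n + 1 : ℝ)) atTop (𝓝 0) :=
      tendsto_one_div_add_atTop_nhds_zero_nat
    simpa only [zero_smul, add_zero] using (h0.smul_const (p - w)).const_add (w + v)
  exact hcl.mem_of_tendsto hlim (Eventually.of_forall hmem)

lemma Convex.exists_twoSidedDirections_lt (hC : Convex ℝ C) (hcl : IsClosed C) {z u : E}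
    (hz : z ∈ C) (hu : u ∈ hC.twoSidedDirections hz) (hbdd : BddBelow {t : ℝ | z + t • u ∈ C}) :
    ∃ a : ℝ, a < 0 ∧ ∃ hp : z + a • u ∈ C, hC.twoSidedDirections hp < hC.twoSidedDirections hz := by
  obtain ⟨ε, hε, hεu⟩ := id hu
  set S := {t : ℝ | z + t • u ∈ C}
  have hεS : -ε ∈ S := hεu _ (by rw [abs_neg, abs_of_pos hε])
  have haS : sInf S ∈ S := (hcl.preimage (by fun_prop)).csInf_mem ⟨_, hεS⟩ hbdd
  have ha : sInf S ≤ -ε := csInf_le hbdd hεS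
  refine ⟨sInf S, by linarith, haS, SetLike.lt_iff_le_and_exists.2 ⟨?_, u, hu, ?_⟩⟩
  · have hd : 0 < ε - sInf S := by linarith
    refine hC.twoSidedDirections_le_of_mem_openSegment haS (hεu ε (abs_of_pos hε).le) hz
      ⟨ε / (ε - sInf S), -sInf S / (ε - sInf S), by positivity, div_pos (by linarith) hd,
        by field_simp; ring, ?_⟩
    match_scalars <;> field_simp <;> ring
  · rintro ⟨δ, hδ, hδu⟩
    have : sInf S - δ ∈ S := by
      show z + (sInf S - δ) • u ∈ C
      rw [show z + (sInf S - δ) • u = z + sInf S • u + (-δ) • u by module]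
      exact hδu (-δ) (by rw [abs_neg, abs_of_pos hδ])
    linarith [csInf_le hbdd this]

lemma Convex.mem_convexHull_extremePoints_add_recessionCone_of_bddBelow (hC : Convex ℝ C)
    (hcl : IsClosed C) {z u : E} (hz : z ∈ C)
    (ih : ∀ p (hp : p ∈ C), hC.twoSidedDirections hp < hC.twoSidedDirections hz →
      p ∈ convexHull ℝ (C.extremePoints ℝ) + recessionCone C)
    (hu : u ∈ hC.twoSidedDirections hz) (hbdd : BddBelow {t : ℝ | z + t • u ∈ C}) :
    z ∈ convexHull ℝ (C.extremePoints ℝ) + recessionCone C := by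
  obtain ⟨a, ha, hp, hlt⟩ := hC.exists_twoSidedDirections_lt hcl hz hu hbdd
  have hpG := ih _ hp hlt
  by_cases hbdd' : BddAbove {t : ℝ | z + t • u ∈ C}
  · obtain ⟨b, hb, hq, hlt'⟩ := hC.exists_twoSidedDirections_lt hcl hz (neg_mem hu)
      ((bddBelow_setOf_add_smul_neg_mem_iff z u).2 hbdd')
    have hab : a + b < 0 := by linarith
    convert (convex_convexHull ℝ _).add (convex_recessionCone hC) hpG (ih _ hq hlt')
      (div_nonneg_of_nonpos hb.le hab.le) (div_nonneg_of_nonpos ha.le hab.le)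
      (by rw [← add_div, add_comm, div_self hab.ne]) using 1
    match_scalars <;> field_simp [hab.ne] <;> ring
  · have hray : ∀ t : ℝ, 0 ≤ t → z + t • ((-a) • u) ∈ C := by
      intro t ht
      obtain ⟨s, hs, hts⟩ := not_bddAbove_iff.1 hbdd' (-a * t)
      rw [smul_smul]
      exact (hC.ordConnected_setOf_add_smul_mem z u).out
        (by simpa using hz : (0 : ℝ) ∈ {t : ℝ | z + t • u ∈ C}) hs
        ⟨by nlinarith, by linarith⟩
    have hsub : convexHull ℝ (C.extremePoints ℝ) + recessionCone C + recessionCone C ⊆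
        convexHull ℝ (C.extremePoints ℝ) + recessionCone C := by
      rw [add_assoc]
      exact add_subset_add_left recessionCone_add_recessionCone_subset
    rw [show z = z + a • u + (-a) • u by module]
    exact hsub (add_mem_add hpG (hC.mem_recessionCone_of_forall_add_smul_mem hcl hray))

lemma Convex.mem_convexHull_extremePoints_add_recessionCone_of_forall_lt (hC : Convex ℝ C)
    (hcl : IsClosed C) (hline : ¬∃ x u : E, u ≠ 0 ∧ ∀ t : ℝ, x + t • u ∈ C) {z : E} (hz : z ∈ C)
    (ih : ∀ p (hp : p ∈ C), hC.twoSidedDirections hp < hC.twoSidedDirections hz →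
      p ∈ convexHull ℝ (C.extremePoints ℝ) + recessionCone C) :
    z ∈ convexHull ℝ (C.extremePoints ℝ) + recessionCone C := by
  by_cases hbot : hC.twoSidedDirections hz = ⊥
  · exact subset_add_left _ zero_mem_recessionCone
      (subset_convexHull ℝ _ (hC.mem_extremePoints_of_twoSidedDirections_eq_bot hz hbot))
  obtain ⟨u, hu, hu0⟩ := Submodule.exists_mem_ne_zero_of_ne_bot hbot
  rcases hC.bddBelow_or_bddAbove_setOf_add_smul_mem hline z hu0 with hbdd | hbdd
  · exact hC.mem_convexHull_extremePoints_add_recessionCone_of_bddBelow hcl hz ih hu hbdd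
  · exact hC.mem_convexHull_extremePoints_add_recessionCone_of_bddBelow hcl hz ih (neg_mem hu)
      ((bddBelow_setOf_add_smul_neg_mem_iff z u).2 hbdd)

theorem Convex.subset_convexHull_extremePoints_add_recessionCone [FiniteDimensional ℝ E]
    (hC : Convex ℝ C) (hcl : IsClosed C) (hline : ¬∃ x u : E, u ≠ 0 ∧ ∀ t : ℝ, x + t • u ∈ C) :
    C ⊆ convexHull ℝ (C.extremePoints ℝ) + recessionCone C := by
  suffices ∀ z : C, (z : E) ∈ convexHull ℝ (C.extremePoints ℝ) + recessionCone C from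
    fun z hz => this ⟨z, hz⟩
  intro z
  induction z using (InvImage.wf (fun z : C => hC.twoSidedDirections z.2) wellFounded_lt).induction
    with
  | _ z ih =>
    exact hC.mem_convexHull_extremePoints_add_recessionCone_of_forall_lt hcl hline z.2
      fun p hp hlt => ih ⟨p, hp⟩ hlt

theorem closed_convex_eq_convexHull_extremePoints_add_recession_general
    (n : ℕ) (C : Set (Fin n → ℝ))
    (hclosed : IsClosed C) (hconv : Convex ℝ C)
    (hline : ¬∃ (x u : Fin n → ℝ), u ≠ 0 ∧ ∀ t : ℝ, x + t • u ∈ C) :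
    C = { z | ∃ y ∈ convexHull ℝ (Set.extremePoints ℝ C),
      ∃ v : Fin n → ℝ, (∀ w ∈ C, w + v ∈ C) ∧ z = y + v } := by
  refine ((hconv.subset_convexHull_extremePoints_add_recessionCone hclosed hline).antisymm
    hconv.convexHull_extremePoints_add_recessionCone_subset).trans ?_
  ext z
  constructor <;> rintro ⟨y, hy, v, hv, h⟩ <;> exact ⟨y, hy, v, hv, h.symm⟩

/-- a nonempty closed convex subset `C ⊆ ℝⁿ` containing no affine line
satisfies `C = Conv(Ext(C)) + lim(C)`, where `Ext(C)` is its set of extreme points and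
`lim(C) = {v : C + v ⊆ C}` is its recession cone. -/
theorem closed_convex_eq_convexHull_extremePoints_add_recession
    (n : ℕ) (C : Set (Fin n → ℝ))
    (hne : C.Nonempty) (hclosed : IsClosed C) (hconv : Convex ℝ C)
    (hline : ¬∃ (x u : Fin n → ℝ), u ≠ 0 ∧ ∀ t : ℝ, x + t • u ∈ C) :
    C = { z | ∃ y ∈ convexHull ℝ (Set.extremePoints ℝ C),
      ∃ v : Fin n → ℝ, (∀ w ∈ C, w + v ∈ C) ∧ z = y + v } :=
  closed_convex_eq_convexHull_extremePoints_add_recession_general n C hclosed hconv hline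
end
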